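/- arXiv:2202.04032 — 7 statements merged into one kernel-verified Lean document; each statement's English description precedes it below -/
import Mathlib

section
/- Let L be the linear operator on the space of polynomials (over the rationals, say) spanned by the monomials x^j, j ≥ 1, determined by L(x^j) = (x^{2j-1} + 2x^{2j} + x^{2j+1})/4 for every j ≥ 1. Then for every integer i ≥ 0, the i-fold iterate satisfies L^i(x) = 4^{-i} ( Σ_{j=1}^{2^i} j·x^j + Σ_{j=2^i+1}^{2^{i+1}-1} (2^{i+1} - j)·x^j ). -/
/-!
On multiples of `X` the operator is `X * q ↦ ¼ X (1 + X)² q(X²)`, because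
`L(X^(j+1)) = ¼ X (1 + X)² X^(2j)`. For the geometric sums `G n = 1 + X + ⋯ + X^(n-1)` one has
`(1 + X) G n (X²) = G (2n)`, so by induction `L^i(X) = 4^(-i) X (G (2^i))²`. The coefficient of
`X^k` in `X (G M)²` counts the ways to write `k - 1` as a sum of two exponents below `M`, which is
the tent `min k (2M - k)`.
-/

open Polynomial Finset

section Semiring

variable {R : Type*} [CommSemiring R]

theorem one_add_X_mul_expand_geom_sum (n : ℕ) :
    (1 + X) * expand R 2 (∑ k ∈ range n, X ^ k) = ∑ k ∈ range (2 * n), (X : R[X]) ^ k := by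
  induction n with
  | zero => simp
  | succ n ih =>
    rw [sum_range_succ, map_add, mul_add, ih, Nat.mul_succ, sum_range_succ, sum_range_succ,
      map_pow, expand_X, ← pow_mul]
    ring

theorem coeff_geom_sum (M m : ℕ) :
    (∑ k ∈ range M, (X : R[X]) ^ k).coeff m = if m < M then 1 else 0 := by
  simp only [finsetSum_coeff, coeff_X_pow, sum_ite_eq, mem_range]

theorem coeff_X_mul_geom_sum_sq (M n : ℕ) :
    (X * (∑ k ∈ range M, (X : R[X]) ^ k) ^ 2).coeff n = ((min n (2 * M - n) : ℕ) : R) := by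
  cases n with
  | zero => simp
  | succ n =>
    have hcount : #{a ∈ range M | a ≤ n ∧ n - a < M} = min (n + 1) (2 * M - (n + 1)) := by
      rw [show {a ∈ range M | a ≤ n ∧ n - a < M} = Ico (n + 1 - M) (min (n + 1) M) by
        ext a; simp only [mem_filter, mem_range, mem_Ico]; omega]
      rw [Nat.card_Ico]; omega
    rw [coeff_X_mul, sq, sum_mul, finsetSum_coeff]
    simp only [coeff_X_pow_mul', coeff_geom_sum, ← ite_and, sum_boole, hcount]

theorem coeff_tent (M n : ℕ) :
    (∑ j ∈ Icc 1 M, (j : R[X]) * X ^ j +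
        ∑ j ∈ Icc (M + 1) (2 * M - 1), ((2 * M - j : ℕ) : R[X]) * X ^ j).coeff n =
      ((min n (2 * M - n) : ℕ) : R) := by
  simp only [coeff_add, finsetSum_coeff, ← C_eq_natCast, coeff_C_mul_X_pow, sum_ite_eq,
    mem_Icc]
  split_ifs with hlow hhigh hhigh
  · omega
  · rw [add_zero, min_eq_left (by omega)]
  · rw [zero_add, min_eq_right (by omega)]
  · rw [add_zero, show min n (2 * M - n) = 0 by omega, Nat.cast_zero]

theorem X_mul_geom_sum_sq_eq_tent (M : ℕ) :
    X * (∑ k ∈ range M, (X : R[X]) ^ k) ^ 2 =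
      ∑ j ∈ Icc 1 M, (j : R[X]) * X ^ j +
        ∑ j ∈ Icc (M + 1) (2 * M - 1), ((2 * M - j : ℕ) : R[X]) * X ^ j := by
  ext n
  rw [coeff_X_mul_geom_sum_sq, coeff_tent]

end Semiring

section Operator

variable {K : Type*} [Field K] {L : Module.End K K[X]}

theorem apply_X_mul_eq (hL : ∀ j : ℕ, 1 ≤ j →
      L (X ^ j) = C (1/4 : K) * (X ^ (2*j - 1) + 2 * X ^ (2*j) + X ^ (2*j + 1))) (q : K[X]) :
    L (X * q) = C (1/4 : K) * X * (1 + X) ^ 2 * expand K 2 q := by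
  induction q using Polynomial.induction_on' with
  | add p q hp hq => rw [mul_add, map_add, hp, hq, map_add, mul_add]
  | monomial n a =>
    rw [← C_mul_X_pow_eq_monomial, mul_left_comm, ← pow_succ', ← smul_eq_C_mul, map_smul,
      hL _ (Nat.le_add_left 1 n), map_mul, expand_C, map_pow, expand_X, smul_eq_C_mul,
      show 2 * (n + 1) - 1 = 2 * n + 1 by omega]
    ring

theorem pow_apply_X_eq (hL : ∀ j : ℕ, 1 ≤ j →
      L (X ^ j) = C (1/4 : K) * (X ^ (2*j - 1) + 2 * X ^ (2*j) + X ^ (2*j + 1))) (i : ℕ) :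
    (L ^ i) X = C ((1/4 : K) ^ i) * (X * (∑ k ∈ range (2 ^ i), X ^ k) ^ 2) := by
  induction i with
  | zero => simp
  | succ i ih =>
    rw [pow_succ', Module.End.mul_apply, ih, ← smul_eq_C_mul, map_smul, apply_X_mul_eq hL,
      map_pow, smul_eq_C_mul, pow_succ' 2 i, ← one_add_X_mul_expand_geom_sum,
      pow_succ (1/4 : K) i, map_mul]
    ring

end Operator

/-- If `L` is the linear operator on polynomials (over `ℚ`) determined on
monomials by `L(x^j) = (x^{2j-1} + 2x^{2j} + x^{2j+1})/4` for `j ≥ 1`, then for every `i ≥ 0`,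
`L^i(x) = 4^{-i} (Σ_{j=1}^{2^i} j x^j + Σ_{j=2^i+1}^{2^{i+1}-1} (2^{i+1}-j) x^j)`. -/
theorem stmt0 (L : Module.End ℚ (Polynomial ℚ))
    (hL : ∀ j : ℕ, 1 ≤ j →
      L (X ^ j) = C (1/4 : ℚ) * (X ^ (2*j - 1) + 2 * X ^ (2*j) + X ^ (2*j + 1))) :
    ∀ i : ℕ, (L ^ i) X =
      C ((1/4 : ℚ) ^ i) *
        ((∑ j ∈ Finset.Icc (1:ℕ) (2 ^ i), (j : Polynomial ℚ) * X ^ j) +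
          ∑ j ∈ Finset.Icc (2 ^ i + 1 : ℕ) (2 ^ (i + 1) - 1),
            ((2 ^ (i + 1) - j : ℕ) : Polynomial ℚ) * X ^ j) := by
  intro i
  rw [pow_apply_X_eq hL, pow_succ' 2 i, X_mul_geom_sum_sq_eq_tent]
end

section
/- Let (ρ_{n,N})_{n≥1, N≥0} be real numbers with ρ_{1,0} = 1 and ρ_{n,0} = 0 for n ≥ 2, satisfying the recurrence ρ_{n,N+1} = (1/4)ρ_{n,N} + (1/2) Σ_{n₁+n₂=n, n₁,n₂≥1} ρ_{n₁,N} ρ_{n₂,N} + (1/4) Σ_{n₁+n₂+n₃=n, n₁,n₂,n₃≥1} ρ_{n₁,N} ρ_{n₂,N} ρ_{n₃,N}. Then for every N ≥ 0 and every complex z with |z| ≤ 1, the series Σ_{n≥1} ρ_{n,N} z^n converges absolutely and equals P^{∘N}(z) (equivalently, the identity Σ_{n≥1} ρ_{n,N} z^n = P^{∘N}(z) holds as formal power series). -/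
/-!
Write `f_N(z) = Σ_{n ≥ 1} ρ_{n,N} zⁿ`. The recurrence says precisely that the coefficients of
`f_{N+1}` are those of `(f_N + 2 f_N² + f_N³)/4`, i.e. `f_{N+1} = P ∘ f_N`. Since `P` has degree 3,
induction shows `ρ_{n,N} = 0` for `n > 3^N`; so every series is a finite sum, and the coefficient
identity is checked by expanding the square and the cube of a finite sum.
-/

noncomputable def P : ℂ → ℂ := fun z => (z + 2 * z ^ 2 + z ^ 3) / 4

open Finset

section GeneratingSums

variable {R : Type*} [CommSemiring R]

def coeffSq (c : ℕ → R) (n : ℕ) : R :=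
  ∑ n₁ ∈ Icc 1 n, ∑ n₂ ∈ Icc 1 n, if n₁ + n₂ = n then c n₁ * c n₂ else 0

def coeffCube (c : ℕ → R) (n : ℕ) : R :=
  ∑ n₁ ∈ Icc 1 n, ∑ n₂ ∈ Icc 1 n, ∑ n₃ ∈ Icc 1 n,
    if n₁ + n₂ + n₃ = n then c n₁ * c n₂ * c n₃ else 0

lemma map_coeffSq {S : Type*} [CommSemiring S] (f : R →+* S) (c : ℕ → R) (n : ℕ) :
    f (coeffSq c n) = coeffSq (fun k => f (c k)) n := by
  simp only [coeffSq, map_sum, apply_ite f, map_mul, map_zero]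

lemma map_coeffCube {S : Type*} [CommSemiring S] (f : R →+* S) (c : ℕ → R) (n : ℕ) :
    f (coeffCube c n) = coeffCube (fun k => f (c k)) n := by
  simp only [coeffCube, map_sum, apply_ite f, map_mul, map_zero]

variable {c : ℕ → R} {m : ℕ}

/-- Both boxes can be enlarged to `Icc 1 (m + n)`: the new terms vanish, because of `hc` on one
side and because their indices are too large to add up to `n` on the other. -/
lemma coeffSq_eq_sum_product (hc : ∀ k, m < k → c k = 0) (n : ℕ) :
    coeffSq c n = ∑ x ∈ Icc 1 m ×ˢ Icc 1 m, if x.1 + x.2 = n then c x.1 * c x.2 else 0 := by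
  have hm : Icc 1 m ⊆ Icc 1 (m + n) := Icc_subset_Icc_right (by omega)
  have hn : Icc 1 n ⊆ Icc 1 (m + n) := Icc_subset_Icc_right (by omega)
  rw [coeffSq, ← sum_product', sum_subset (product_subset_product hn hn),
    sum_subset (product_subset_product hm hm)]
  · intro x hx hx'
    simp only [mem_product, mem_Icc] at hx hx'
    rcases Nat.lt_or_ge m x.1 with h | h
    · simp [hc _ h]
    · simp [hc x.2 (by omega)]
  · intro x hx hx'
    simp only [mem_product, mem_Icc] at hx hx'
    exact if_neg (by omega)

lemma coeffCube_eq_sum_product (hc : ∀ k, m < k → c k = 0) (n : ℕ) :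
    coeffCube c n = ∑ x ∈ Icc 1 m ×ˢ Icc 1 m ×ˢ Icc 1 m,
      if x.1 + x.2.1 + x.2.2 = n then c x.1 * c x.2.1 * c x.2.2 else 0 := by
  have hm : Icc 1 m ⊆ Icc 1 (m + n) := Icc_subset_Icc_right (by omega)
  have hn : Icc 1 n ⊆ Icc 1 (m + n) := Icc_subset_Icc_right (by omega)
  have h3 : ∀ {s t : Finset ℕ}, s ⊆ t → s ×ˢ s ×ˢ s ⊆ t ×ˢ t ×ˢ t := fun h =>
    product_subset_product h (product_subset_product h h)
  simp_rw [coeffCube, ← sum_product']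
  rw [sum_subset (h3 hn), sum_subset (h3 hm)]
  · intro x hx hx'
    simp only [mem_product, mem_Icc] at hx hx'
    rcases Nat.lt_or_ge m x.1 with h | h
    · simp [hc _ h]
    rcases Nat.lt_or_ge m x.2.1 with h | h
    · simp [hc _ h]
    · simp [hc x.2.2 (by omega)]
  · intro x hx hx'
    simp only [mem_product, mem_Icc] at hx hx'
    exact if_neg (by omega)

lemma coeffSq_eq_zero (hc : ∀ k, m < k → c k = 0) {n : ℕ} (hn : 2 * m < n) :
    coeffSq c n = 0 := by
  rw [coeffSq_eq_sum_product hc]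
  refine sum_eq_zero fun x hx => if_neg ?_
  simp only [mem_product, mem_Icc] at hx
  omega

lemma coeffCube_eq_zero (hc : ∀ k, m < k → c k = 0) {n : ℕ} (hn : 3 * m < n) :
    coeffCube c n = 0 := by
  rw [coeffCube_eq_sum_product hc]
  refine sum_eq_zero fun x hx => if_neg ?_
  simp only [mem_product, mem_Icc] at hx
  omega

lemma sum_mul_pow_eq_sum_fiberwise {ι : Type*} {s : Finset ι} {t : Finset ℕ} {d : ι → ℕ}
    (hd : ∀ x ∈ s, d x ∈ t) (F : ι → R) (z : R) :
    ∑ x ∈ s, F x * z ^ d x = ∑ n ∈ t, (∑ x ∈ s, if d x = n then F x else 0) * z ^ n := by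
  rw [← sum_fiberwise_of_maps_to hd]
  refine sum_congr rfl fun n _ => ?_
  rw [sum_filter, sum_mul]
  refine sum_congr rfl fun x _ => ?_
  split_ifs with h <;> simp [h]

lemma sum_Icc_mul_pow_of_le (hc : ∀ k, m < k → c k = 0) {K : ℕ} (hK : m ≤ K) (z : R) :
    ∑ n ∈ Icc 1 K, c n * z ^ n = ∑ n ∈ Icc 1 m, c n * z ^ n := by
  refine (sum_subset (Icc_subset_Icc_right hK) fun k hk hk' => ?_).symm
  simp only [mem_Icc] at hk hk'
  rw [hc k (by omega), zero_mul]

lemma sum_Icc_coeffSq_mul_pow (hc : ∀ k, m < k → c k = 0) {K : ℕ} (hK : 2 * m ≤ K) (z : R) :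
    ∑ n ∈ Icc 1 K, coeffSq c n * z ^ n = (∑ n ∈ Icc 1 m, c n * z ^ n) ^ 2 := by
  have hd : ∀ x ∈ Icc 1 m ×ˢ Icc 1 m, x.1 + x.2 ∈ Icc 1 K := fun x hx => by
    simp only [mem_product, mem_Icc] at hx ⊢
    omega
  simp_rw [coeffSq_eq_sum_product hc, ← sum_mul_pow_eq_sum_fiberwise hd, sq, sum_mul_sum,
    ← sum_product', pow_add]
  exact sum_congr rfl fun x _ => by ring

lemma sum_Icc_coeffCube_mul_pow (hc : ∀ k, m < k → c k = 0) {K : ℕ} (hK : 3 * m ≤ K)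
    (z : R) :
    ∑ n ∈ Icc 1 K, coeffCube c n * z ^ n = (∑ n ∈ Icc 1 m, c n * z ^ n) ^ 3 := by
  have hd : ∀ x ∈ Icc 1 m ×ˢ Icc 1 m ×ˢ Icc 1 m, x.1 + x.2.1 + x.2.2 ∈ Icc 1 K := fun x hx => by
    simp only [mem_product, mem_Icc] at hx ⊢
    omega
  simp_rw [coeffCube_eq_sum_product hc, ← sum_mul_pow_eq_sum_fiberwise hd, pow_three,
    sum_mul_sum, mul_sum, ← sum_product', pow_add]
  exact sum_congr rfl fun x _ => by ring

end GeneratingSums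

lemma eq_zero_of_three_pow_lt {𝕜 : Type*} [Semifield 𝕜] {a : ℕ → ℕ → 𝕜}
    (h0 : ∀ n, 2 ≤ n → a n 0 = 0)
    (hrec : ∀ n, 1 ≤ n → ∀ N, a n (N + 1) =
      1 / 4 * a n N + 1 / 2 * coeffSq (a · N) n + 1 / 4 * coeffCube (a · N) n)
    (N : ℕ) : ∀ n, 3 ^ N < n → a n N = 0 := by
  induction N with
  | zero => exact fun n hn => h0 n (by rw [pow_zero] at hn; omega)
  | succ N ih =>
    intro n hn
    have h3 : 3 ^ (N + 1) = 3 * 3 ^ N := pow_succ' 3 N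
    rw [hrec n (by omega), ih n (by omega), coeffSq_eq_zero ih (by omega),
      coeffCube_eq_zero ih (by omega)]
    simp

theorem sum_Icc_three_pow_eq_iterate_P {a : ℕ → ℕ → ℂ} (h10 : a 1 0 = 1)
    (h0 : ∀ n, 2 ≤ n → a n 0 = 0)
    (hrec : ∀ n, 1 ≤ n → ∀ N, a n (N + 1) =
      1 / 4 * a n N + 1 / 2 * coeffSq (a · N) n + 1 / 4 * coeffCube (a · N) n)
    (N : ℕ) (z : ℂ) : ∑ n ∈ Icc 1 (3 ^ N), a n N * z ^ n = P^[N] z := by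
  induction N with
  | zero => simp [h10]
  | succ N ih =>
    have hc := eq_zero_of_three_pow_lt h0 hrec N
    have h3 : 3 ^ (N + 1) = 3 * 3 ^ N := pow_succ' 3 N
    calc ∑ n ∈ Icc 1 (3 ^ (N + 1)), a n (N + 1) * z ^ n
        = 1 / 4 * ∑ n ∈ Icc 1 (3 ^ (N + 1)), a n N * z ^ n
          + 1 / 2 * ∑ n ∈ Icc 1 (3 ^ (N + 1)), coeffSq (a · N) n * z ^ n
          + 1 / 4 * ∑ n ∈ Icc 1 (3 ^ (N + 1)), coeffCube (a · N) n * z ^ n := by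
          simp only [mul_sum, ← sum_add_distrib]
          refine sum_congr rfl fun n hn => ?_
          rw [hrec n (mem_Icc.1 hn).1]
          ring
      _ = 1 / 4 * P^[N] z + 1 / 2 * (P^[N] z) ^ 2 + 1 / 4 * (P^[N] z) ^ 3 := by
          rw [sum_Icc_mul_pow_of_le hc (by omega), sum_Icc_coeffSq_mul_pow hc (by omega),
            sum_Icc_coeffCube_mul_pow hc (by omega), ih]
      _ = P^[N + 1] z := by
          rw [Function.iterate_succ_apply', P]
          ring

/-- if `ρ_{n,N}` satisfies `ρ_{1,0} = 1`, `ρ_{n,0} = 0` for `n ≥ 2`, and the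
three-term merging recurrence, then for every `N` and every `|z| ≤ 1` the series
`Σ_{n≥1} ρ_{n,N} z^n` converges absolutely and equals the `N`-fold iterate `P^{∘N}(z)`. -/
theorem stmt1 (ρ : ℕ → ℕ → ℝ) (h10 : ρ 1 0 = 1) (h0 : ∀ n : ℕ, 2 ≤ n → ρ n 0 = 0)
    (hrec : ∀ n : ℕ, 1 ≤ n → ∀ N : ℕ,
      ρ n (N + 1) =
        (1/4) * ρ n N
        + (1/2) * ∑ n₁ ∈ Finset.Icc (1:ℕ) n, ∑ n₂ ∈ Finset.Icc (1:ℕ) n,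
            (if n₁ + n₂ = n then ρ n₁ N * ρ n₂ N else 0)
        + (1/4) * ∑ n₁ ∈ Finset.Icc (1:ℕ) n, ∑ n₂ ∈ Finset.Icc (1:ℕ) n,
            ∑ n₃ ∈ Finset.Icc (1:ℕ) n,
              (if n₁ + n₂ + n₃ = n then ρ n₁ N * ρ n₂ N * ρ n₃ N else 0)) :
    ∀ (N : ℕ) (z : ℂ), ‖z‖ ≤ 1 →
      Summable (fun n : ℕ => ‖(ρ (n + 1) N : ℂ) * z ^ (n + 1)‖) ∧
      ∑' n : ℕ, (ρ (n + 1) N : ℂ) * z ^ (n + 1) = P^[N] z := by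
  intro N z _
  have h10ℂ : (ρ 1 0 : ℂ) = 1 := by rw [h10, Complex.ofReal_one]
  have h0ℂ : ∀ n, 2 ≤ n → (ρ n 0 : ℂ) = 0 := fun n hn => by rw [h0 n hn, Complex.ofReal_zero]
  have hrecℂ : ∀ n, 1 ≤ n → ∀ N, (ρ n (N + 1) : ℂ) = 1 / 4 * (ρ n N : ℂ)
      + 1 / 2 * coeffSq (fun k => (ρ k N : ℂ)) n + 1 / 4 * coeffCube (fun k => (ρ k N : ℂ)) n := by
    intro n hn N
    have h : ρ n (N + 1) = 1 / 4 * ρ n N + 1 / 2 * coeffSq (ρ · N) n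
        + 1 / 4 * coeffCube (ρ · N) n := hrec n hn N
    have h' := congrArg Complex.ofRealHom h
    rw [map_add, map_add, map_mul, map_mul, map_mul, map_coeffSq, map_coeffCube] at h'
    simpa using h'
  have hc := eq_zero_of_three_pow_lt (a := fun n N => (ρ n N : ℂ)) h0ℂ hrecℂ N
  have hvanish : ∀ n ∉ range (3 ^ N), (ρ (n + 1) N : ℂ) * z ^ (n + 1) = 0 := fun n hn => by
    rw [hc (n + 1) (by simp only [mem_range] at hn; omega), zero_mul]
  refine ⟨summable_of_ne_finset_zero fun n hn => by rw [hvanish n hn, norm_zero], ?_⟩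
  rw [tsum_eq_sum hvanish, ← sum_Icc_three_pow_eq_iterate_P (a := fun n N => (ρ n N : ℂ)) h10ℂ h0ℂ hrecℂ, range_eq_Ico,
    sum_Ico_add' (fun n => (ρ n N : ℂ) * z ^ n), Ico_add_one_right_eq_Icc]
end

section
/- There exist an open connected set U ⊆ ℂ containing the real interval [0,1) with P(U) ⊆ U, and a holomorphic function Φ : U → ℂ, such that the functions z ↦ 4^N · P^{∘N}(z) converge to Φ uniformly on compact subsets of U as N → ∞, and Φ satisfies Φ(0) = 0, Φ'(0) = 1, and the Schröder-type functional equation Φ(P(z)) = Φ(z)/4 for all z ∈ U. -/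
open Filter

/-!
For `‖z‖ ≤ r < 1` the map `P` contracts norms by the factor `c = ((1 + r) / 2)²`, so the orbit
of `z` decays like `r cᵏ`. Writing `4ᴺ Pᴺ(z) = z ∏_{k<N} (1 + Pᵏ(z))²`, the factors are
`1 + O(cᵏ)`: the approximants are uniformly bounded and consecutive ones differ by `O(cᴺ)`, which
gives uniform convergence on every closed subdisc of the unit disc. Holomorphy, the value and
derivative at `0` and the functional equation then pass to the limit.
-/

open Topology Metric Finset

theorem tendstoUniformlyOn_limUnder_of_dist_le_geometric {α E : Type*} [PseudoMetricSpace E]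
    [CompleteSpace E] [Nonempty E] {F : ℕ → α → E} {s : Set α} {C c : ℝ} (hc₀ : 0 ≤ c)
    (hc₁ : c < 1) (hF : ∀ x ∈ s, ∀ n, dist (F n x) (F (n + 1) x) ≤ C * c ^ n) :
    TendstoUniformlyOn F (fun x => limUnder atTop (F · x)) atTop s := by
  rw [Metric.tendstoUniformlyOn_iff]
  intro ε hε
  have hbound : Tendsto (fun n : ℕ => C * c ^ n / (1 - c)) atTop (𝓝 0) := by
    simpa using ((tendsto_pow_atTop_nhds_zero_of_lt_one hc₀ hc₁).const_mul C).div_const (1 - c)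
  filter_upwards [hbound.eventually (gt_mem_nhds hε)] with n hn x hx
  have hlim := (cauchySeq_of_le_geometric c C hc₁ (hF x hx)).tendsto_limUnder
  rw [dist_comm]
  exact (dist_le_of_le_geometric_of_tendsto c C hc₁ (hF x hx) hlim n).trans_lt hn

theorem norm_iterate_le_pow_mul {E : Type*} [SeminormedAddCommGroup E] {f : E → E} {r c : ℝ}
    (hf : ∀ z, ‖z‖ ≤ r → ‖f z‖ ≤ c * ‖z‖) (hc₀ : 0 ≤ c) (hc₁ : c ≤ 1) {z : E} (hz : ‖z‖ ≤ r)
    (n : ℕ) : ‖f^[n] z‖ ≤ c ^ n * ‖z‖ := by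
  induction n with
  | zero => simp
  | succ n ih =>
    have hr : ‖f^[n] z‖ ≤ r :=
      ih.trans <| (mul_le_of_le_one_left (norm_nonneg z) (pow_le_one₀ hc₀ hc₁)).trans hz
    calc ‖f^[n + 1] z‖ = ‖f (f^[n] z)‖ := by rw [Function.iterate_succ_apply']
      _ ≤ c * (c ^ n * ‖z‖) := (hf _ hr).trans (mul_le_mul_of_nonneg_left ih hc₀)
      _ = c ^ (n + 1) * ‖z‖ := by ring

theorem P_eq_mul_sq (z : ℂ) : P z = z * (1 + z) ^ 2 / 4 := by
  unfold P; ring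

theorem P_zero : P 0 = 0 := by
  simp [P]

theorem differentiable_P : Differentiable ℂ P := by
  unfold P; fun_prop

theorem hasDerivAt_P_zero : HasDerivAt P (1 / 4) 0 := by
  unfold P
  simpa using (((hasDerivAt_id (0 : ℂ)).add ((hasDerivAt_pow 2 (0 : ℂ)).const_mul 2)).add
    (hasDerivAt_pow 3 (0 : ℂ))).div_const 4

theorem norm_P_le {r : ℝ} {z : ℂ} (hz : ‖z‖ ≤ r) : ‖P z‖ ≤ ((1 + r) / 2) ^ 2 * ‖z‖ := by
  have h : ‖1 + z‖ ≤ 1 + r := (norm_add_le 1 z).trans (by rw [norm_one]; linarith)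
  have h' : ‖1 + z‖ ^ 2 ≤ (1 + r) ^ 2 := pow_le_pow_left₀ (norm_nonneg _) h 2
  rw [P_eq_mul_sq, norm_div, norm_mul, norm_pow]
  norm_num
  nlinarith [norm_nonneg z]

theorem norm_iterate_P_le {r : ℝ} (hr : r < 1) {z : ℂ} (hz : ‖z‖ ≤ r) (n : ℕ) :
    ‖P^[n] z‖ ≤ r * (((1 + r) / 2) ^ 2) ^ n := by
  have hr₀ : 0 ≤ r := (norm_nonneg z).trans hz
  have hc₁ : ((1 + r) / 2) ^ 2 ≤ 1 := by nlinarith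
  rw [mul_comm]
  exact (norm_iterate_le_pow_mul (fun _ => norm_P_le) (by positivity) hc₁ hz n).trans
    (mul_le_mul_of_nonneg_left hz (by positivity))

theorem mapsTo_P_ball : Set.MapsTo P (ball 0 1) (ball 0 1) := by
  intro z hz
  rw [mem_ball_zero_iff] at hz ⊢
  have := norm_P_le le_rfl (z := z)
  nlinarith [norm_nonneg z]

noncomputable def koenigsApprox (N : ℕ) (z : ℂ) : ℂ := 4 ^ N * P^[N] z

noncomputable def koenigs (z : ℂ) : ℂ := limUnder atTop (koenigsApprox · z)

theorem koenigsApprox_succ (N : ℕ) (z : ℂ) :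
    koenigsApprox (N + 1) z = koenigsApprox N z * (1 + P^[N] z) ^ 2 := by
  rw [koenigsApprox, koenigsApprox, Function.iterate_succ_apply', P_eq_mul_sq]
  ring

theorem koenigsApprox_eq_mul_prod (N : ℕ) (z : ℂ) :
    koenigsApprox N z = z * ∏ k ∈ range N, (1 + P^[k] z) ^ 2 := by
  induction N with
  | zero => simp [koenigsApprox]
  | succ N ih => rw [koenigsApprox_succ, ih, prod_range_succ, mul_assoc]

theorem koenigsApprox_apply_P (N : ℕ) (z : ℂ) :
    koenigsApprox N (P z) = koenigsApprox (N + 1) z / 4 := by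
  rw [koenigsApprox, koenigsApprox, Function.iterate_succ_apply, pow_succ]
  ring

theorem koenigsApprox_apply_zero (N : ℕ) : koenigsApprox N 0 = 0 := by
  simp [koenigsApprox_eq_mul_prod]

theorem differentiable_koenigsApprox (N : ℕ) : Differentiable ℂ (koenigsApprox N) :=
  (differentiable_P.iterate N).const_mul _

theorem deriv_koenigsApprox_zero (N : ℕ) : deriv (koenigsApprox N) 0 = 1 := by
  have h : HasDerivAt (koenigsApprox N) (4 ^ N * (1 / 4) ^ N) 0 :=
    (hasDerivAt_P_zero.iterate _ P_zero N).const_mul _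
  rw [h.deriv, ← mul_pow]
  norm_num

section OrbitBound

variable {z : ℂ} {r c : ℝ} (hc₀ : 0 ≤ c) (hc₁ : c < 1) (horbit : ∀ k, ‖P^[k] z‖ ≤ r * c ^ k)
include hc₀ hc₁ horbit

theorem norm_koenigsApprox_le (N : ℕ) :
    ‖koenigsApprox N z‖ ≤ r * Real.exp (r / (1 - c)) ^ 2 := by
  have hz : ‖z‖ ≤ r := by simpa using horbit 0
  have hr₀ : 0 ≤ r := (norm_nonneg z).trans hz
  have hfactor : ∏ k ∈ range N, ‖1 + P^[k] z‖ ≤ ∏ k ∈ range N, (1 + r * c ^ k) :=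
    prod_le_prod (fun _ _ => norm_nonneg _) fun k _ =>
      (norm_add_le _ _).trans (by rw [norm_one]; linarith [horbit k])
  have hexp : ∏ k ∈ range N, (1 + r * c ^ k) ≤ Real.exp (r / (1 - c)) := by
    refine (Real.prod_one_add_le_exp_sum _ fun k => by positivity).trans (Real.exp_le_exp.mpr ?_)
    rw [← mul_sum, div_eq_mul_one_div]
    gcongr
    simpa using geom_sum_Ico_le_of_lt_one (m := 0) (n := N) hc₀ hc₁
  rw [koenigsApprox_eq_mul_prod, norm_mul, norm_prod]
  simp only [norm_pow]
  rw [prod_pow]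
  gcongr
  exact hfactor.trans hexp

theorem dist_koenigsApprox_succ_le (N : ℕ) :
    dist (koenigsApprox N z) (koenigsApprox (N + 1) z) ≤
      r * Real.exp (r / (1 - c)) ^ 2 * (r * (2 + r)) * c ^ N := by
  have hr₀ : 0 ≤ r := (norm_nonneg z).trans (by simpa using horbit 0)
  set w := P^[N] z
  have hw : ‖w‖ ≤ r * c ^ N := horbit N
  have hwr : ‖w‖ ≤ r := hw.trans (mul_le_of_le_one_right hr₀ (pow_le_one₀ hc₀ hc₁.le))
  have h2w : ‖2 + w‖ ≤ 2 + r := (norm_add_le _ _).trans (by norm_num; linarith)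
  have hdiff : koenigsApprox N z - koenigsApprox (N + 1) z =
      -(koenigsApprox N z * (w * (2 + w))) := by
    rw [koenigsApprox_succ]; ring
  rw [dist_eq_norm, hdiff, norm_neg, norm_mul, norm_mul]
  calc ‖koenigsApprox N z‖ * (‖w‖ * ‖2 + w‖)
      ≤ r * Real.exp (r / (1 - c)) ^ 2 * (r * c ^ N * (2 + r)) :=
        mul_le_mul (norm_koenigsApprox_le hc₀ hc₁ horbit N)
          (mul_le_mul hw h2w (norm_nonneg _) (by positivity)) (by positivity) (by positivity)
    _ = r * Real.exp (r / (1 - c)) ^ 2 * (r * (2 + r)) * c ^ N := by ring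

end OrbitBound

theorem tendstoUniformlyOn_koenigsApprox {r : ℝ} (hr₀ : 0 ≤ r) (hr : r < 1) :
    TendstoUniformlyOn koenigsApprox koenigs atTop (closedBall 0 r) := by
  have hc₁ : ((1 + r) / 2) ^ 2 < 1 := by nlinarith
  exact tendstoUniformlyOn_limUnder_of_dist_le_geometric (by positivity) hc₁ fun z hz =>
    dist_koenigsApprox_succ_le (by positivity) hc₁
      (norm_iterate_P_le hr (mem_closedBall_zero_iff.mp hz))

theorem tendstoLocallyUniformlyOn_koenigsApprox :
    TendstoLocallyUniformlyOn koenigsApprox koenigs atTop (ball 0 1) := by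
  refine tendstoLocallyUniformlyOn_of_forall_exists_nhds fun z hz => ?_
  rw [mem_ball_zero_iff] at hz
  refine ⟨closedBall 0 ((1 + ‖z‖) / 2),
    mem_nhdsWithin_of_mem_nhds (closedBall_mem_nhds_of_mem ?_),
    tendstoUniformlyOn_koenigsApprox (by positivity) (by linarith)⟩
  rw [mem_ball_zero_iff]
  linarith

/-- there exist an open connected set `U ⊇ [0,1)` with `P(U) ⊆ U` and a
holomorphic function `Φ` on `U` such that `4^N P^{∘N} → Φ` locally uniformly on `U`,
`Φ(0) = 0`, `Φ'(0) = 1`, and `Φ(P(z)) = Φ(z)/4` on `U` (the Koenigs linearizer of `P` at 0). -/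
theorem stmt2 : ∃ (U : Set ℂ) (Φ : ℂ → ℂ),
    IsOpen U ∧ IsConnected U ∧
    (∀ x : ℝ, x ∈ Set.Ico (0 : ℝ) 1 → (x : ℂ) ∈ U) ∧
    Set.MapsTo P U U ∧
    DifferentiableOn ℂ Φ U ∧
    TendstoLocallyUniformlyOn (fun (N : ℕ) (z : ℂ) => (4 : ℂ) ^ N * P^[N] z) Φ atTop U ∧
    Φ 0 = 0 ∧ deriv Φ 0 = 1 ∧
    ∀ z ∈ U, Φ (P z) = Φ z / 4 := by
  have hconv := tendstoLocallyUniformlyOn_koenigsApprox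
  have hdiff N := (differentiable_koenigsApprox N).differentiableOn (s := ball 0 1)
  have hlim {z : ℂ} (hz : z ∈ ball 0 1) := hconv.tendsto_at hz
  have h0 : (0 : ℂ) ∈ ball 0 1 := mem_ball_self one_pos
  refine ⟨ball 0 1, koenigs, isOpen_ball, (convex_ball 0 1).isConnected ⟨0, h0⟩,
    fun x hx => ?_, mapsTo_P_ball, hconv.differentiableOn (.of_forall hdiff) isOpen_ball, hconv,
    ?_, ?_, fun z hz => ?_⟩
  · rw [mem_ball_zero_iff, Complex.norm_real, Real.norm_of_nonneg hx.1]
    exact hx.2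
  · have hzero := hlim h0
    simp only [koenigsApprox_apply_zero] at hzero
    exact tendsto_nhds_unique hzero tendsto_const_nhds
  · have hderiv := (hconv.deriv (.of_forall hdiff) isOpen_ball).tendsto_at h0
    simp only [Function.comp_def, deriv_koenigsApprox_zero] at hderiv
    exact tendsto_nhds_unique hderiv tendsto_const_nhds
  · have hshift := ((hlim hz).comp (tendsto_add_atTop_nat 1)).div_const 4
    simp only [Function.comp_def, ← koenigsApprox_apply_P] at hshift
    exact tendsto_nhds_unique (hlim (mapsTo_P_ball hz)) hshift
end

section
/- Suppose Φ is holomorphic in a neighborhood of 0 in ℂ with Φ(0) = 0, Φ'(0) = 1, and Φ(P(z)) = Φ(z)/4 for all z near 0, and write its Taylor series as Φ(z) = Σ_{i≥1} φ_i z^i. Then φ_1 = 1 and for every i ≥ 1, φ_{i+1} = (4/(1 - 4^{-i})) · Σ_{k=0}^{i-1} 4^{k-i} · C(2(i-k), k+1) · φ_{i-k}, where C(a,b) denotes the binomial coefficient, understood to be 0 when b > a. -/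
/-!
Truncating the Taylor series of `Φ` after degree `n` turns `Φ (P z) = Φ z / 4` into a polynomial
identity modulo `z ^ (n + 1)`. Since `P z ^ j = 4⁻ʲ zʲ (1 + z)²ʲ`, comparing the coefficients of
`zⁿ` gives `∑_{j ≤ n} 4⁻ʲ C(2j, n - j) φⱼ = φₙ / 4`; for `n = i + 1` the term `j = 0` vanishes,
and moving the term `j = n` to the right-hand side yields the recursion.
-/

open Filter

open Asymptotics Polynomial Finset Topology

variable {𝕜 : Type*} [NontriviallyNormedField 𝕜]

namespace Polynomial

theorem eval_eq_mul_eval_divX {R : Type*} [CommSemiring R] {q : R[X]} (hq : q.coeff 0 = 0)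
    (z : R) : q.eval z = z * q.divX.eval z := by
  conv_lhs => rw [← X_mul_divX_add q]
  simp [hq]

theorem coeff_eq_zero_of_isBigO_pow {n : ℕ} {q : 𝕜[X]}
    (h : (fun z => q.eval z) =O[𝓝[≠] 0] (· ^ n)) {j : ℕ} (hj : j < n) : q.coeff j = 0 := by
  induction n generalizing q j with
  | zero => omega
  | succ n ih =>
    have hq0 : q.coeff 0 = 0 := by
      rw [coeff_zero_eq_eval_zero]
      refine tendsto_nhds_unique (f := fun z => q.eval z) (l := 𝓝[≠] 0)
        ((q.continuous.tendsto 0).mono_left nhdsWithin_le_nhds) ?_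
      refine h.trans_tendsto (((continuous_pow (n + 1)).tendsto' 0 0 ?_).mono_left
        nhdsWithin_le_nhds)
      simp
    obtain _ | j := j
    · exact hq0
    rw [← coeff_divX]
    refine ih ?_ (by omega)
    refine (h.mul (isBigO_refl (fun z : 𝕜 => z⁻¹) _)).congr' ?_ ?_ <;>
      filter_upwards [self_mem_nhdsWithin] with z (hz : z ≠ 0)
    · rw [eval_eq_mul_eval_divX hq0]; field_simp
    · field_simp; ring

end Polynomial

theorem HasFPowerSeriesAt.isBigO_comp_sub_sum {E α : Type*} [NormedAddCommGroup E]
    [NormedSpace 𝕜 E] {f : 𝕜 → E} {p : FormalMultilinearSeries 𝕜 𝕜 E}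
    (hp : HasFPowerSeriesAt f p 0) {g : α → 𝕜} {l : Filter α} (hg : Tendsto g l (𝓝 0))
    (N : ℕ) :
    (fun x => f (g x) - ∑ j ∈ range N, g x ^ j • p.coeff j) =O[l] fun x => g x ^ N := by
  have h := (hp.isBigO_sub_partialSum_pow N).comp_tendsto hg
  simp only [zero_add, FormalMultilinearSeries.partialSum,
    FormalMultilinearSeries.apply_eq_pow_smul_coeff, ← norm_pow] at h
  exact h.trans (isBigO_norm_left.2 (isBigO_refl _ _))

theorem HasFPowerSeriesAt.sum_coeff_mul_coeff_pow_eq {f : 𝕜 → 𝕜}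
    {p : FormalMultilinearSeries 𝕜 𝕜 𝕜} (hp : HasFPowerSeriesAt f p 0) {q : 𝕜[X]}
    (hq : q.coeff 0 = 0) {c : 𝕜} (hfe : ∀ᶠ z in 𝓝 0, f (q.eval z) = c * f z) (n : ℕ) :
    ∑ j ∈ range (n + 1), p.coeff j * (q ^ j).coeff n = c * p.coeff n := by
  have hq_tendsto : Tendsto (fun z => q.eval z) (𝓝 0) (𝓝 0) := by
    simpa [← coeff_zero_eq_eval_zero, hq] using q.continuous.tendsto 0
  have hq_isBigO : (fun z => q.eval z) =O[𝓝 0] fun z => z := by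
    simpa [← eval_eq_mul_eval_divX hq] using (isBigO_refl (fun z : 𝕜 => z) _).mul
      ((q.divX.continuous.tendsto 0).isBigO_one 𝕜)
  let S : 𝕜[X] := ∑ j ∈ range (n + 1), C (p.coeff j) * X ^ j
  let Q : 𝕜[X] := ∑ j ∈ range (n + 1), C (p.coeff j) * q ^ j - C c * S
  have hQ : (fun z => Q.eval z) =O[𝓝 0] (· ^ (n + 1)) := by
    have hf := hp.isBigO_comp_sub_sum tendsto_id (n + 1)
    have hfq := (hp.isBigO_comp_sub_sum hq_tendsto (n + 1)).trans (hq_isBigO.pow (n + 1))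
    have hfe' : (fun z => f (q.eval z) - c * f z) =O[𝓝 0] (· ^ (n + 1)) :=
      EventuallyEq.trans_isBigO (f₂ := 0) (hfe.mono fun _ hz => sub_eq_zero.2 hz)
        (isBigO_zero _ _)
    refine ((hfe'.sub hfq).add (hf.const_mul_left c)).congr_left fun z => ?_
    simp only [Q, S, eval_sub, eval_mul, eval_C, eval_finsetSum, eval_pow, eval_X, smul_eq_mul, id,
      mul_comm (p.coeff _)]
    ring
  have hQn := coeff_eq_zero_of_isBigO_pow (hQ.mono nhdsWithin_le_nhds) (Nat.lt_succ_self n)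
  have hSn : S.coeff n = p.coeff n := by
    simp [S, finsetSum_coeff]
  simpa [Q, hSn, finsetSum_coeff, sub_eq_zero] using hQn

noncomputable def polyP : ℂ[X] := C 4⁻¹ * (X * (1 + X) ^ 2)

theorem eval_polyP (z : ℂ) : polyP.eval z = P z := by
  simp only [polyP, P, eval_mul, eval_C, eval_X, eval_pow, eval_add, eval_one]
  ring

theorem coeff_polyP_pow {j n : ℕ} (h : j ≤ n) :
    (polyP ^ j).coeff n = 4⁻¹ ^ j * (2 * j).choose (n - j) := by
  rw [polyP, mul_pow, ← map_pow, coeff_C_mul, mul_pow, ← pow_mul, mul_comm (X ^ j),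
    coeff_mul_X_pow', if_pos h, coeff_one_add_X_pow]

theorem coeff_polyP_zero : polyP.coeff 0 = 0 := by
  simp [polyP]

theorem coeff_succ_eq_of_sum_eq {a : ℕ → ℂ} {i : ℕ} (hi : 1 ≤ i)
    (h : ∑ j ∈ range (i + 2), a j * (4⁻¹ ^ j * (2 * j).choose (i + 1 - j)) = 4⁻¹ * a (i + 1)) :
    a (i + 1) = 4 / (1 - 4 ^ (-(i : ℤ))) *
      ∑ k ∈ range i, 4 ^ ((k : ℤ) - i) * ((2 * (i - k)).choose (k + 1) : ℂ) * a (i - k) := by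
  have hmiddle : ∑ k ∈ range i, 4 ^ ((k : ℤ) - i) * ((2 * (i - k)).choose (k + 1) : ℂ) * a (i - k)
      = ∑ m ∈ range i, a (m + 1) * (4⁻¹ ^ (m + 1) * (2 * (m + 1)).choose (i + 1 - (m + 1))) := by
    conv_rhs => rw [← sum_range_reflect]
    refine sum_congr rfl fun k hk => ?_
    have hk := mem_range.1 hk
    rw [show i - 1 - k + 1 = i - k by omega, show i + 1 - (i - k) = k + 1 by omega,
      show (k : ℤ) - i = -((i - k : ℕ) : ℤ) by omega, zpow_neg, zpow_natCast, inv_pow]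
    ring
  have hden : (4 : ℂ) ^ (-(i : ℤ)) = 4⁻¹ ^ i := by rw [zpow_neg, zpow_natCast, inv_pow]
  have hne : (1 : ℂ) - 4⁻¹ ^ i ≠ 0 := by
    rw [sub_ne_zero, ne_comm, inv_pow, inv_ne_one]
    exact_mod_cast (Nat.one_lt_pow (by omega) (by norm_num : 1 < 4)).ne'
  rw [sum_range_succ, sum_range_succ', ← hmiddle] at h
  simp only [Nat.sub_zero, Nat.choose_zero_succ, Nat.cast_zero, mul_zero, add_zero, Nat.sub_self,
    Nat.choose_zero_right, Nat.cast_one, mul_one] at h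
  rw [hden, div_mul_eq_mul_div, eq_div_iff hne]
  linear_combination (-4) * h

theorem stmt3_general (Φ : ℂ → ℂ) (p : FormalMultilinearSeries ℂ ℂ ℂ)
    (hp : HasFPowerSeriesAt Φ p 0)
    (h1 : deriv Φ 0 = 1)
    (hfe : ∀ᶠ z in nhds (0 : ℂ), Φ (P z) = Φ z / 4) :
    p.coeff 1 = 1 ∧
    ∀ i : ℕ, 1 ≤ i →
      p.coeff (i + 1) =
        (4 / (1 - (4 : ℂ) ^ (-(i : ℤ)))) *
          ∑ k ∈ Finset.range i,
            (4 : ℂ) ^ ((k : ℤ) - (i : ℤ)) * ((2 * (i - k)).choose (k + 1) : ℂ) *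
              p.coeff (i - k) := by
  refine ⟨hp.deriv.symm.trans h1, fun i hi => coeff_succ_eq_of_sum_eq hi ?_⟩
  have hfe' : ∀ᶠ z in 𝓝 0, Φ (polyP.eval z) = 4⁻¹ * Φ z :=
    hfe.mono fun z hz => by rw [eval_polyP, hz, div_eq_inv_mul]
  rw [← hp.sum_coeff_mul_coeff_pow_eq coeff_polyP_zero hfe' (i + 1)]
  exact sum_congr rfl fun j hj => by rw [coeff_polyP_pow (Nat.lt_succ_iff.1 (mem_range.1 hj))]

/-- if `Φ` is holomorphic near `0` with power series `Φ(z) = Σ φ_i z^i`,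
`Φ(0) = 0`, `Φ'(0) = 1`, and `Φ(P(z)) = Φ(z)/4` near `0`, then `φ₁ = 1` and for `i ≥ 1`,
`φ_{i+1} = (4/(1-4^{-i})) Σ_{k=0}^{i-1} 4^{k-i} C(2(i-k), k+1) φ_{i-k}`. -/
theorem stmt3 (Φ : ℂ → ℂ) (p : FormalMultilinearSeries ℂ ℂ ℂ)
    (hp : HasFPowerSeriesAt Φ p 0)
    (h0 : Φ 0 = 0) (h1 : deriv Φ 0 = 1)
    (hfe : ∀ᶠ z in nhds (0 : ℂ), Φ (P z) = Φ z / 4) :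
    p.coeff 1 = 1 ∧
    ∀ i : ℕ, 1 ≤ i →
      p.coeff (i + 1) =
        (4 / (1 - (4 : ℂ) ^ (-(i : ℤ)))) *
          ∑ k ∈ Finset.range i,
            (4 : ℂ) ^ ((k : ℤ) - (i : ℤ)) * ((2 * (i - k)).choose (k + 1) : ℂ) *
              p.coeff (i - k) :=
  stmt3_general Φ p hp h1 hfe
end

section
/- For N ≥ 0 define the polynomial F_N(z) = z(z^{2^N} - 1)^2 / (4^N (z-1)^2). Then for every p ∈ (0,1] and every integer i ≥ 0, the limit lim_{N→∞} [ F_N^{(i)}(1-p) · p^{i-1} ] / [ F_N'(1-p) · i! ] = (i + 1 - p)/(2 - p) holds. -/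
/-!
With `m = 2 ^ N`, `4 ^ N F_N(z) = z (1 - z ^ m)² / (1 - z)²`, which differs from `z / (1 - z)²` by
`O(|z| ^ m)` uniformly on every closed disc of radius `< 1`. By Weierstrass's theorem on locally
uniform limits of holomorphic functions, every derivative at `1 - p` converges as well, and the
`k`-th derivative of `z / (1 - z)² = 1 / (1 - z)² - 1 / (1 - z)` is `k! (k + z) / (1 - z) ^ (k + 2)`.
The factor `4 ^ N` cancels in the ratio, which therefore tends to
`i! (i + 1 - p) p ^ (-i - 2) p ^ (i - 1) / ((2 - p) p ^ (-3) i!) = (i + 1 - p) / (2 - p)`.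
-/

open Filter Polynomial
open Metric Topology

section Weierstrass

variable {E ι : Type*} [NormedAddCommGroup E] [NormedSpace ℂ E] [CompleteSpace E]
  {φ : Filter ι} {F : ι → ℂ → E} {f : ℂ → E} {U : Set ℂ}

theorem differentiableOn_iterate_deriv (hf : DifferentiableOn ℂ f U) (hU : IsOpen U) (k : ℕ) :
    DifferentiableOn ℂ (deriv^[k] f) U := by
  induction k with
  | zero => exact hf
  | succ k ih => simpa only [Function.iterate_succ_apply'] using ih.deriv hU

theorem tendstoLocallyUniformlyOn_iterate_deriv (hf : TendstoLocallyUniformlyOn F f φ U)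
    (hF : ∀ᶠ n in φ, DifferentiableOn ℂ (F n) U) (hU : IsOpen U) (k : ℕ) :
    TendstoLocallyUniformlyOn (fun n => deriv^[k] (F n)) (deriv^[k] f) φ U := by
  induction k with
  | zero => exact hf
  | succ k ih =>
    simp only [Function.iterate_succ_apply']
    exact ih.deriv (hF.mono fun n hn => differentiableOn_iterate_deriv hn hU k) hU

end Weierstrass

noncomputable def geomSq (m : ℕ) (z : ℂ) : ℂ := z * (1 - z ^ m) ^ 2 / (1 - z) ^ 2

noncomputable def geomSqLim (z : ℂ) : ℂ := z / (1 - z) ^ 2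

theorem ne_one_of_mem_ball_zero_one {z : ℂ} (hz : z ∈ ball (0 : ℂ) 1) : z ≠ 1 := by
  rintro rfl
  simp at hz

theorem norm_geomSqLim_sub_geomSq_le {r : ℝ} (hr : r < 1) {z : ℂ} (hz : ‖z‖ ≤ r) (m : ℕ) :
    ‖geomSqLim z - geomSq m z‖ ≤ 3 * r ^ m / (1 - r) ^ 2 := by
  have hr0 : 0 ≤ r := (norm_nonneg z).trans hz
  have hgap : 1 - r ≤ ‖1 - z‖ := by
    have := norm_sub_norm_le (1 : ℂ) z
    rw [norm_one] at this
    linarith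
  have hzm : ‖z ^ m‖ ≤ r ^ m := by
    rw [norm_pow]
    exact pow_le_pow_left₀ (norm_nonneg _) hz m
  have htwo : ‖2 - z ^ m‖ ≤ 3 := calc
    ‖2 - z ^ m‖ ≤ ‖(2 : ℂ)‖ + ‖z ^ m‖ := norm_sub_le _ _
    _ ≤ 2 + 1 := by
      rw [Complex.norm_ofNat]
      gcongr
      exact hzm.trans (pow_le_one₀ hr0 hr.le)
    _ = 3 := by norm_num
  have hdiff : geomSqLim z - geomSq m z = z * z ^ m * (2 - z ^ m) / (1 - z) ^ 2 := by
    rw [geomSqLim, geomSq]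
    ring
  rw [hdiff, norm_div, norm_mul, norm_mul, norm_pow (1 - z)]
  calc ‖z‖ * ‖z ^ m‖ * ‖2 - z ^ m‖ / ‖1 - z‖ ^ 2 ≤ 1 * r ^ m * 3 / (1 - r) ^ 2 := by
        gcongr
        linarith
    _ = 3 * r ^ m / (1 - r) ^ 2 := by ring

theorem tendstoUniformlyOn_geomSq {r : ℝ} (hr0 : 0 ≤ r) (hr : r < 1) :
    TendstoUniformlyOn geomSq geomSqLim atTop (closedBall 0 r) := by
  rw [Metric.tendstoUniformlyOn_iff]
  intro ε hε
  have hbound : Tendsto (fun m : ℕ => 3 * r ^ m / (1 - r) ^ 2) atTop (𝓝 0) := by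
    simpa using ((tendsto_pow_atTop_nhds_zero_of_lt_one hr0 hr).const_mul 3).div_const _
  filter_upwards [hbound.eventually (gt_mem_nhds hε)] with m hm z hz
  rw [dist_eq_norm]
  exact (norm_geomSqLim_sub_geomSq_le hr (mem_closedBall_zero_iff.mp hz) m).trans_lt hm

theorem tendstoLocallyUniformlyOn_geomSq :
    TendstoLocallyUniformlyOn geomSq geomSqLim atTop (ball 0 1) := by
  rw [tendstoLocallyUniformlyOn_iff_forall_isCompact isOpen_ball]
  intro K hK hKc
  obtain ⟨r, hr, hKr⟩ := exists_lt_subset_ball hKc.isClosed hK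
  refine (tendstoUniformlyOn_geomSq (le_max_right r 0) (max_lt hr one_pos)).mono ?_
  exact hKr.trans (ball_subset_closedBall.trans (closedBall_subset_closedBall (le_max_left r 0)))

theorem differentiableOn_geomSq (m : ℕ) : DifferentiableOn ℂ (geomSq m) (ball 0 1) :=
  DifferentiableOn.div (by fun_prop) (by fun_prop) fun _ hz =>
    pow_ne_zero _ (sub_ne_zero.mpr (ne_one_of_mem_ball_zero_one hz).symm)

theorem iterate_deriv_geomSqLim (k : ℕ) {z : ℂ} (hz : z ≠ 1) :
    deriv^[k] geomSqLim z = k.factorial * (k + z) / (1 - z) ^ (k + 2) := by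
  induction k generalizing z with
  | zero => simp [geomSqLim]
  | succ k ih =>
    have hz' : 1 - z ≠ 0 := sub_ne_zero.mpr hz.symm
    have hloc : deriv^[k] geomSqLim =ᶠ[𝓝 z]
        fun w => k.factorial * (k + w) / (1 - w) ^ (k + 2) :=
      (eventually_ne_nhds hz).mono fun w hw => ih hw
    have hnum : HasDerivAt (fun w : ℂ => k.factorial * (k + w)) (k.factorial) z := by
      simpa using ((hasDerivAt_id z).const_add (k : ℂ)).const_mul (k.factorial : ℂ)
    have hden : HasDerivAt (fun w : ℂ => (1 - w) ^ (k + 2)) (-((k + 2) * (1 - z) ^ (k + 1))) z := by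
      simpa using ((hasDerivAt_id z).const_sub 1).fun_pow (k + 2)
    have hderiv := (hnum.fun_div hden (pow_ne_zero _ hz')).congr_deriv (show _ =
        ((k + 1).factorial : ℂ) * (k + 1 + z) / (1 - z) ^ (k + 1 + 2) by
      push_cast [Nat.factorial_succ]
      field_simp
      ring)
    rw [Function.iterate_succ_apply', hloc.deriv_eq, hderiv.deriv]
    push_cast
    rfl

theorem tendsto_iterate_deriv_geomSq {z : ℂ} (hz : z ∈ ball (0 : ℂ) 1) (k : ℕ) :
    Tendsto (fun m => deriv^[k] (geomSq m) z) atTop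
      (𝓝 (k.factorial * (k + z) / (1 - z) ^ (k + 2))) := by
  rw [← iterate_deriv_geomSqLim k (ne_one_of_mem_ball_zero_one hz)]
  exact (tendstoLocallyUniformlyOn_iterate_deriv tendstoLocallyUniformlyOn_geomSq
    (.of_forall differentiableOn_geomSq) isOpen_ball k).tendsto_at hz

theorem one_sub_ofReal_mem_ball_zero_one {p : ℝ} (hp0 : 0 < p) (hp2 : p < 2) :
    (1 : ℂ) - p ∈ ball (0 : ℂ) 1 := by
  rw [mem_ball_zero_iff, ← Complex.ofReal_one, ← Complex.ofReal_sub, Complex.norm_real,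
    Real.norm_eq_abs, abs_lt]
  constructor <;> linarith

theorem iteratedDeriv_eq_inv_four_pow_mul_geomSq {f : ℂ → ℂ} {m N : ℕ}
    (hf : ∀ z : ℂ, z ≠ 1 → f z = z * (z ^ m - 1) ^ 2 / ((4 : ℂ) ^ N * (z - 1) ^ 2))
    {z : ℂ} (hz : z ≠ 1) (k : ℕ) :
    iteratedDeriv k f z = (4 ^ N)⁻¹ * deriv^[k] (geomSq m) z := by
  have hloc : f =ᶠ[𝓝 z] fun w => (4 ^ N)⁻¹ * geomSq m w :=
    (eventually_ne_nhds hz).mono fun w hw => by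
      have : 1 - w ≠ 0 := sub_ne_zero.mpr (Ne.symm hw)
      have : w - 1 ≠ 0 := sub_ne_zero.mpr hw
      rw [hf w hw]
      unfold geomSq
      field_simp
      ring
  rw [hloc.iteratedDeriv_eq, iteratedDeriv_const_mul_field, iteratedDeriv_eq_iterate]

/-- let `F_N` be the polynomial with
`F_N(z) = z(z^{2^N}-1)²/(4^N (z-1)²)` for `z ≠ 1`. Then for every `p ∈ (0,1]` and `i ≥ 0`,
`F_N^{(i)}(1-p) p^{i-1} / (F_N'(1-p) i!) → (i+1-p)/(2-p)` as `N → ∞`. -/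
theorem stmt8 (F : ℕ → Polynomial ℂ)
    (hF : ∀ N : ℕ, ∀ z : ℂ, z ≠ 1 →
      (F N).eval z = z * (z ^ (2 ^ N) - 1) ^ 2 / ((4 : ℂ) ^ N * (z - 1) ^ 2))
    (p : ℝ) (hp : p ∈ Set.Ioc (0 : ℝ) 1) (i : ℕ) :
    Tendsto
      (fun N : ℕ =>
        iteratedDeriv i (fun w => (F N).eval w) ((1 : ℂ) - p) * (p : ℂ) ^ ((i : ℤ) - 1) /
          (deriv (fun w => (F N).eval w) ((1 : ℂ) - p) * (i.factorial : ℂ)))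
      atTop (nhds (((i : ℂ) + 1 - (p : ℂ)) / (2 - (p : ℂ)))) := by
  obtain ⟨hp0, hp1⟩ := hp
  have hx := one_sub_ofReal_mem_ball_zero_one hp0 (by linarith)
  have hderivs (N k : ℕ) := iteratedDeriv_eq_inv_four_pow_mul_geomSq (hF N)
    (ne_one_of_mem_ball_zero_one hx) k
  have hp : (p : ℂ) ≠ 0 := Complex.ofReal_ne_zero.mpr hp0.ne'
  have h2p : (2 : ℂ) - p ≠ 0 := by
    rw [← Complex.ofReal_ofNat, ← Complex.ofReal_sub]
    exact Complex.ofReal_ne_zero.mpr (by linarith)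
  have hlimit (k : ℕ) : Tendsto (fun N => deriv^[k] (geomSq (2 ^ N)) (1 - p)) atTop
      (𝓝 (k.factorial * (k + 1 - p) / p ^ (k + 2))) := by
    simpa [Function.comp_def, add_sub_assoc] using (tendsto_iterate_deriv_geomSq hx k).comp
      (tendsto_pow_atTop_atTop_of_one_lt one_lt_two)
  have hlimit_one : Tendsto (fun N => deriv (geomSq (2 ^ N)) (1 - p)) atTop
      (𝓝 ((2 - p) / p ^ 3)) := by
    simpa [one_add_one_eq_two] using hlimit 1
  have hlim := ((hlimit i).mul_const ((p : ℂ) ^ ((i : ℤ) - 1))).div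
    (hlimit_one.mul_const (i.factorial : ℂ)) (by simp [hp, h2p, Nat.factorial_ne_zero])
  convert hlim using 2 with N
  · rw [Pi.div_apply, ← iteratedDeriv_one, hderivs, hderivs, Function.iterate_one, mul_assoc,
      mul_assoc, mul_div_mul_left _ _ (by simp)]
  · rw [zpow_sub_one₀ hp, zpow_natCast]
    field_simp [Nat.factorial_ne_zero]
    ring
end

section
/- The power series H(z) = Σ_{n≥2} z^n / ( n! (2^{n-1} − 1) ) defines an entire function on ℂ which satisfies the functional equation H(2z) = 2H(z) + 2(e^z − 1 − z) for all z ∈ ℂ, admits the alternative representation H(z) = Σ_{j≥1} 2^j ( e^{z/2^j} − 1 − z/2^j ) (the series converging for every z), and obeys the growth bound |H(z)| ≤ 4 e^{|z|/2} for all z ∈ ℂ. -/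
/-! Expanding `1 / (2^(n+1) - 1) = ∑_{j ≥ 1} 2^(-(n+1) j)` turns `H` into the absolutely convergent
double series `∑_{n,j} z^(n+2) / (n+2)! · 2^(-(n+1) j)`; summing over `n` first gives the dyadic
representation. The functional equation holds termwise since `2^(n+2) = 2 (2^(n+1) - 1) + 2`, and
`2^(n+1) - 1 ≥ 2^n` dominates the `n`-th term by `4 (|z|/2)^(n+2) / (n+2)!`, which gives both the
growth bound and locally uniform convergence, hence holomorphy. -/

theorem hasSum_pow_add_two_div_factorial {𝔸 : Type*} [NormedDivisionRing 𝔸] [NormedAlgebra ℚ 𝔸]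
    [CompleteSpace 𝔸] (x : 𝔸) :
    HasSum (fun n : ℕ => x ^ (n + 2) / ((n + 2).factorial : 𝔸)) (NormedSpace.exp x - 1 - x) := by
  have := (hasSum_nat_add_iff' 2).mpr (NormedSpace.expSeries_div_hasSum_exp x)
  simpa [Finset.sum_range_succ, sub_sub] using this

theorem hasSum_inv_pow_succ {𝕜 : Type*} [NormedField 𝕜] [CompleteSpace 𝕜] {q : 𝕜}
    (hq : 1 < ‖q‖) : HasSum (fun j : ℕ => q⁻¹ ^ (j + 1)) (q - 1)⁻¹ := by
  have hq0 : q ≠ 0 := norm_pos_iff.mp (one_pos.trans hq)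
  have hr : ‖q⁻¹‖ < 1 := by rwa [norm_inv, inv_lt_one₀ (one_pos.trans hq)]
  have hsum : q⁻¹ * (1 - q⁻¹)⁻¹ = (q - 1)⁻¹ := by
    rw [← mul_inv, mul_sub, mul_one, mul_inv_cancel₀ hq0]
  simpa only [pow_succ', hsum] using (hasSum_geometric_of_norm_lt_one hr).mul_left q⁻¹

noncomputable def hTerm (z : ℂ) (n : ℕ) : ℂ :=
  z ^ (n + 2) / (((n + 2).factorial : ℂ) * ((2 : ℂ) ^ (n + 1) - 1))

theorem two_pow_le_norm_two_pow_succ_sub_one (n : ℕ) : (2 : ℝ) ^ n ≤ ‖(2 : ℂ) ^ (n + 1) - 1‖ := by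
  have h := norm_sub_norm_le ((2 : ℂ) ^ (n + 1)) 1
  have h1 : (1 : ℝ) ≤ 2 ^ n := one_le_pow₀ (by norm_num)
  simp only [norm_pow, Complex.norm_ofNat, norm_one] at h
  linarith [pow_succ (2 : ℝ) n]

theorem norm_hTerm_le (z : ℂ) (n : ℕ) :
    ‖hTerm z n‖ ≤ 4 * ((‖z‖ / 2) ^ (n + 2) / ((n + 2).factorial : ℝ)) := by
  have h := two_pow_le_norm_two_pow_succ_sub_one n
  rw [hTerm, norm_div, norm_mul, norm_pow, Complex.norm_natCast]
  calc ‖z‖ ^ (n + 2) / ((n + 2).factorial * ‖(2 : ℂ) ^ (n + 1) - 1‖)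
      ≤ ‖z‖ ^ (n + 2) / ((n + 2).factorial * 2 ^ n) := by gcongr
    _ = _ := by rw [div_pow]; field_simp; ring

theorem hTerm_two_mul (z : ℂ) (n : ℕ) :
    hTerm (2 * z) n = 2 * hTerm z n + 2 * (z ^ (n + 2) / ((n + 2).factorial : ℂ)) := by
  have hne : (2 : ℂ) ^ (n + 1) - 1 ≠ 0 :=
    norm_pos_iff.mp ((pow_pos two_pos n).trans_le (two_pow_le_norm_two_pow_succ_sub_one n))
  have hf : ((n + 2).factorial : ℂ) ≠ 0 := by exact_mod_cast (n + 2).factorial_ne_zero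
  rw [hTerm, hTerm, mul_pow]
  field_simp
  ring

theorem hasSum_hTerm_geometric (z : ℂ) (n : ℕ) :
    HasSum (fun j : ℕ => z ^ (n + 2) / ((n + 2).factorial : ℂ) * ((2 : ℂ) ^ (n + 1))⁻¹ ^ (j + 1))
      (hTerm z n) := by
  have hq : 1 < ‖(2 : ℂ) ^ (n + 1)‖ := by
    rw [norm_pow, Complex.norm_ofNat]; exact one_lt_pow₀ one_lt_two n.succ_ne_zero
  have := (hasSum_inv_pow_succ hq).mul_left (z ^ (n + 2) / ((n + 2).factorial : ℂ))
  rwa [← div_eq_mul_inv, div_div] at this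

theorem two_pow_mul_pow_div_factorial (z : ℂ) (n j : ℕ) :
    (2 : ℂ) ^ (j + 1) * ((z / 2 ^ (j + 1)) ^ (n + 2) / ((n + 2).factorial : ℂ)) =
      z ^ (n + 2) / ((n + 2).factorial : ℂ) * ((2 : ℂ) ^ (n + 1))⁻¹ ^ (j + 1) := by
  rw [div_pow, inv_pow, ← pow_mul, ← pow_mul]
  field_simp
  ring

theorem summable_pow_div_factorial_mul_inv_two_pow (z : ℂ) :
    Summable (fun p : ℕ × ℕ =>
      z ^ (p.1 + 2) / ((p.1 + 2).factorial : ℂ) * ((2 : ℂ) ^ (p.1 + 1))⁻¹ ^ (p.2 + 1)) := by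
  have hexp : Summable (fun n : ℕ => ‖z ^ (n + 2) / ((n + 2).factorial : ℂ)‖) :=
    (NormedSpace.norm_expSeries_div_summable z).comp_injective (add_left_injective 2)
  have hgeo : Summable (fun j : ℕ => (2⁻¹ : ℝ) ^ (j + 1)) :=
    (summable_nat_add_iff 1).mpr (summable_geometric_of_lt_one (by norm_num) (by norm_num))
  refine Summable.of_norm_bounded (hexp.mul_of_nonneg hgeo (fun _ => norm_nonneg _)
    (fun _ => by positivity)) fun ⟨n, j⟩ => ?_
  rw [norm_mul, norm_pow, norm_inv, norm_pow, Complex.norm_ofNat]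
  gcongr
  exact le_self_pow₀ one_le_two n.succ_ne_zero

theorem hasSum_two_pow_mul_exp_sub_one_sub (z : ℂ) :
    HasSum (fun j : ℕ => (2 : ℂ) ^ (j + 1) *
        (Complex.exp (z / 2 ^ (j + 1)) - 1 - z / 2 ^ (j + 1)))
      (∑' n, hTerm z n) := by
  have hf := summable_pow_div_factorial_mul_inv_two_pow z
  rw [(hf.hasSum.prod_fiberwise (hasSum_hTerm_geometric z)).tsum_eq]
  refine ((Equiv.prodComm ℕ ℕ).hasSum_iff.mpr hf.hasSum).prod_fiberwise fun j => ?_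
  have := (hasSum_pow_add_two_div_factorial (z / 2 ^ (j + 1))).mul_left ((2 : ℂ) ^ (j + 1))
  simpa only [two_pow_mul_pow_div_factorial, ← Complex.exp_eq_exp_ℂ, Function.comp_apply,
    Equiv.prodComm_apply, Prod.swap_prod_mk] using this

theorem summable_norm_hTerm (z : ℂ) : Summable (fun n => ‖hTerm z n‖) :=
  .of_nonneg_of_le (fun _ => norm_nonneg _) (norm_hTerm_le z)
    ((hasSum_pow_add_two_div_factorial (‖z‖ / 2)).summable.mul_left 4)

theorem norm_tsum_hTerm_le (z : ℂ) : ‖∑' n, hTerm z n‖ ≤ 4 * Real.exp (‖z‖ / 2) := by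
  have hexp := (hasSum_pow_add_two_div_factorial (‖z‖ / 2)).mul_left 4
  rw [← Real.exp_eq_exp_ℝ] at hexp
  calc ‖∑' n, hTerm z n‖ ≤ ∑' n, ‖hTerm z n‖ := norm_tsum_le_tsum_norm (summable_norm_hTerm z)
    _ ≤ 4 * (Real.exp (‖z‖ / 2) - 1 - ‖z‖ / 2) :=
      hasSum_le (norm_hTerm_le z) (summable_norm_hTerm z).hasSum hexp
    _ ≤ 4 * Real.exp (‖z‖ / 2) := by linarith [norm_nonneg z]

theorem differentiable_tsum_hTerm : Differentiable ℂ (fun z => ∑' n, hTerm z n) := by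
  intro z₀
  set R := ‖z₀‖ + 1
  have hR : DifferentiableOn ℂ (fun z => ∑' n, hTerm z n) (Metric.ball 0 R) := by
    refine Complex.differentiableOn_tsum_of_summable_norm
      ((hasSum_pow_add_two_div_factorial (R / 2)).summable.mul_left 4) (fun n => ?_)
      Metric.isOpen_ball fun n z hz => (norm_hTerm_le z n).trans ?_
    · unfold hTerm
      fun_prop
    · have : ‖z‖ < R := mem_ball_zero_iff.mp hz
      gcongr
  exact hR.differentiableAt (Metric.isOpen_ball.mem_nhds (by simp [R]))

theorem tsum_hTerm_two_mul (z : ℂ) :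
    ∑' n, hTerm (2 * z) n = 2 * ∑' n, hTerm z n + 2 * (Complex.exp z - 1 - z) := by
  have hs : Summable (hTerm z) := (summable_norm_hTerm z).of_norm
  have := (hs.hasSum.mul_left 2).add ((hasSum_pow_add_two_div_factorial z).mul_left 2)
  simp only [← hTerm_two_mul, ← Complex.exp_eq_exp_ℂ] at this
  exact this.tsum_eq

/-- the power series `H(z) = Σ_{n≥2} z^n/(n!(2^{n-1}-1))` defines an entire
function satisfying `H(2z) = 2H(z) + 2(e^z - 1 - z)`, admitting the representation
`H(z) = Σ_{j≥1} 2^j (e^{z/2^j} - 1 - z/2^j)` (the series converging for every `z`), and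
obeying `|H(z)| ≤ 4 e^{|z|/2}`. -/
theorem stmt15 (H : ℂ → ℂ)
    (hH : ∀ z : ℂ, H z = ∑' n : ℕ,
      z ^ (n + 2) / (((n + 2).factorial : ℂ) * ((2 : ℂ) ^ (n + 1) - 1))) :
    Differentiable ℂ H ∧
    (∀ z : ℂ, H (2 * z) = 2 * H z + 2 * (Complex.exp z - 1 - z)) ∧
    (∀ z : ℂ,
      Summable (fun j : ℕ =>
        (2 : ℂ) ^ (j + 1) *
          (Complex.exp (z / 2 ^ (j + 1)) - 1 - z / 2 ^ (j + 1))) ∧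
      H z = ∑' j : ℕ,
        (2 : ℂ) ^ (j + 1) *
          (Complex.exp (z / 2 ^ (j + 1)) - 1 - z / 2 ^ (j + 1))) ∧
    ∀ z : ℂ, ‖H z‖ ≤ 4 * Real.exp (‖z‖ / 2) := by
  obtain rfl : H = fun z => ∑' n, hTerm z n := funext hH
  refine ⟨differentiable_tsum_hTerm, tsum_hTerm_two_mul, fun z => ?_, norm_tsum_hTerm_le⟩
  have hrep := hasSum_two_pow_mul_exp_sub_one_sub z
  exact ⟨hrep.summable, hrep.tsum_eq.symm⟩
end

section
/- For z in the open left half-plane {z ∈ ℂ : Re z < 0}, the series G(z) = Σ_{j≥0} 2^{−j} e^{2^j z} converges, defines a holomorphic function there satisfying the bound |G(z)| ≤ 2 for all z with Re z < 0, and obeys the functional equation G(2z) = 2G(z) − 2e^z for all z with Re z < 0. -/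
/-!
On the closed left half-plane the `j`-th term has modulus at most `2⁻ʲ`, so the series is
dominated by the geometric series `∑ 2⁻ʲ = 2`: this gives convergence, the bound `2`, and
holomorphy by the Weierstrass M-test. The functional equation is an index shift, since the
`j`-th term at `2z` is twice the `(j+1)`-st term at `z`.
-/

open Complex

lemma re_two_pow_mul_nonpos {z : ℂ} (hz : z.re ≤ 0) (j : ℕ) : ((2 : ℂ) ^ j * z).re ≤ 0 := by
  have h : (2 : ℂ) ^ j = ((2 ^ j : ℝ) : ℂ) := by push_cast; rfl
  rw [h, re_ofReal_mul]
  exact mul_nonpos_of_nonneg_of_nonpos (by positivity) hz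

lemma norm_exp_two_pow_mul_div_le {z : ℂ} (hz : z.re ≤ 0) (j : ℕ) :
    ‖exp ((2 : ℂ) ^ j * z) / 2 ^ j‖ ≤ (1 / 2 : ℝ) ^ j := by
  rw [norm_div, norm_exp, norm_pow, Complex.norm_two, one_div_pow]
  gcongr
  exact Real.exp_le_one_iff.mpr (re_two_pow_mul_nonpos hz j)

lemma summable_exp_two_pow_mul_div {z : ℂ} (hz : z.re ≤ 0) :
    Summable (fun j : ℕ => exp ((2 : ℂ) ^ j * z) / 2 ^ j) :=
  .of_norm_bounded summable_geometric_two (norm_exp_two_pow_mul_div_le hz)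

lemma norm_tsum_exp_two_pow_mul_div_le_two {z : ℂ} (hz : z.re ≤ 0) :
    ‖∑' j : ℕ, exp ((2 : ℂ) ^ j * z) / 2 ^ j‖ ≤ 2 :=
  tsum_of_norm_bounded hasSum_geometric_two (norm_exp_two_pow_mul_div_le hz)

lemma differentiableOn_tsum_exp_two_pow_mul_div :
    DifferentiableOn ℂ (fun z => ∑' j : ℕ, exp ((2 : ℂ) ^ j * z) / 2 ^ j) {z | z.re < 0} :=
  differentiableOn_tsum_of_summable_norm summable_geometric_two
    (fun _ =>
      ((differentiable_exp.comp (differentiable_id.const_mul _)).div_const _).differentiableOn)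
    (isOpen_lt continuous_re continuous_const)
    (fun j _ hz => norm_exp_two_pow_mul_div_le hz.le j)

lemma tsum_exp_two_pow_mul_two_mul {z : ℂ} (hz : z.re ≤ 0) :
    ∑' j : ℕ, exp ((2 : ℂ) ^ j * (2 * z)) / 2 ^ j
      = 2 * ∑' j : ℕ, exp ((2 : ℂ) ^ j * z) / 2 ^ j - 2 * exp z := by
  have hshift (j : ℕ) : exp ((2 : ℂ) ^ j * (2 * z)) / 2 ^ j
      = 2 * (exp ((2 : ℂ) ^ (j + 1) * z) / 2 ^ (j + 1)) := by
    rw [pow_succ]; field_simp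
  rw [tsum_congr hshift, tsum_mul_left, (summable_exp_two_pow_mul_div hz).tsum_eq_zero_add]
  simp only [pow_zero, one_mul, div_one]
  ring

/-- on the open left half-plane `{Re z < 0}`, the series
`G(z) = Σ_{j≥0} 2^{-j} e^{2^j z}` converges, defines a holomorphic function with
`|G(z)| ≤ 2`, and satisfies `G(2z) = 2G(z) - 2e^z`. -/
theorem stmt16 (G : ℂ → ℂ)
    (hG : ∀ z : ℂ, z.re < 0 →
      G z = ∑' j : ℕ, Complex.exp ((2 : ℂ) ^ j * z) / 2 ^ j) :
    (∀ z : ℂ, z.re < 0 →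
      Summable (fun j : ℕ => Complex.exp ((2 : ℂ) ^ j * z) / 2 ^ j)) ∧
    DifferentiableOn ℂ G {z : ℂ | z.re < 0} ∧
    (∀ z : ℂ, z.re < 0 → ‖G z‖ ≤ 2) ∧
    ∀ z : ℂ, z.re < 0 → G (2 * z) = 2 * G z - 2 * Complex.exp z := by
  refine ⟨fun z hz => summable_exp_two_pow_mul_div hz.le,
    differentiableOn_tsum_exp_two_pow_mul_div.congr hG,
    fun z hz => hG z hz ▸ norm_tsum_exp_two_pow_mul_div_le_two hz.le, fun z hz => ?_⟩
  have h2z : (2 * z).re < 0 := by simpa using mul_neg_of_pos_of_neg two_pos hz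
  rw [hG _ h2z, hG z hz, tsum_exp_two_pow_mul_two_mul hz.le]
end
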